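/- arXiv:2005.04405 — 5 statements merged into one kernel-verified Lean document; each statement's English description precedes it below -/
import Mathlib

section
/- Let a < b, σ2 > 0, σ1 > 0, and σ3 ∈ ℝ. For ψ(x) = (x−a)^{σ2−1} (b−x)^{σ3−1} and x ∈ (a,b), the left Riemann–Liouville integral satisfies (I_a^{σ1} ψ)(x) = [(b−a)^{σ3−1} Γ(σ2)/Γ(σ1+σ2)] · (x−a)^{σ1+σ2−1} · ₂F₁(1−σ3, σ2, σ1+σ2; (x−a)/(b−a)), where ₂F₁ is the Gauss hypergeometric function. -/
open MeasureTheory Real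

/-- Left Riemann–Liouville fractional integral of order `σ` with base point `a`. -/
noncomputable def leftRL (a σ : ℝ) (ψ : ℝ → ℝ) : ℝ → ℝ :=
  fun x => (1 / Real.Gamma σ) * ∫ s in a..x, (x - s) ^ (σ - 1) * ψ s

/-- Gauss hypergeometric function `₂F₁(α, β, γ; z)` via Euler's integral
representation, valid for `0 < β < γ`. -/
noncomputable def hyp2F1 (α β γ z : ℝ) : ℝ :=
  (Real.Gamma γ / (Real.Gamma β * Real.Gamma (γ - β))) *
    ∫ t in (0:ℝ)..1, t ^ (β - 1) * (1 - t) ^ (γ - β - 1) * (1 - z * t) ^ (-α)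

/-!
The affine substitution `s = a + (x - a) t` maps `[0, 1]` onto `[a, x]` and turns the three
factors of the integrand into `(x - a)(1 - t)`, `(x - a) t` and `(b - a)(1 - z t)` with
`z = (x - a)/(b - a)`. Pulling out the powers of `x - a` and `b - a` leaves exactly Euler's
integral for `₂F₁(1 - σ3, σ2, σ1 + σ2; z)`, and the Gamma factors match those of `hyp2F1`.
-/

theorem intervalIntegral_eq_mul_integral_zero_one (f : ℝ → ℝ) (a x : ℝ) :
    ∫ s in a..x, f s = (x - a) * ∫ t in (0:ℝ)..1, f ((x - a) * t + a) := by
  have h := intervalIntegral.smul_integral_comp_mul_add (a := 0) (b := 1) f (x - a) a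
  rw [mul_zero, zero_add, mul_one, sub_add_cancel] at h
  exact h.symm

theorem rpow_weight_comp_affine {a b x t : ℝ} (σ1 σ2 σ3 : ℝ) (hax : a ≤ x) (hxb : x ≤ b)
    (hab : a < b) (ht : t ∈ Set.Icc (0:ℝ) 1) :
    (x - ((x - a) * t + a)) ^ (σ1 - 1) *
        (((x - a) * t + a - a) ^ (σ2 - 1) * (b - ((x - a) * t + a)) ^ (σ3 - 1)) =
      (x - a) ^ (σ1 - 1) * (x - a) ^ (σ2 - 1) * (b - a) ^ (σ3 - 1) *
        (t ^ (σ2 - 1) * (1 - t) ^ (σ1 - 1) * (1 - (x - a) / (b - a) * t) ^ (σ3 - 1)) := by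
  obtain ⟨ht0, ht1⟩ := ht
  have hxa : 0 ≤ x - a := by linarith
  have hba : 0 < b - a := by linarith
  have hz1 : (x - a) / (b - a) ≤ 1 := (div_le_one hba).2 (by linarith)
  have hzt : 0 ≤ 1 - (x - a) / (b - a) * t := by
    nlinarith [div_nonneg hxa hba.le]
  have hbs : b - ((x - a) * t + a) = (b - a) * (1 - (x - a) / (b - a) * t) := by
    field_simp
    ring
  rw [show x - ((x - a) * t + a) = (x - a) * (1 - t) by ring, add_sub_cancel_right, hbs,
    mul_rpow hxa (by linarith), mul_rpow hxa ht0, mul_rpow hba.le hzt]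
  ring

theorem leftRL_power_weight_eq_mul_integral {a b x : ℝ} (σ1 σ2 σ3 : ℝ) (hax : a < x)
    (hxb : x ≤ b) :
    leftRL a σ1 (fun s => (s - a) ^ (σ2 - 1) * (b - s) ^ (σ3 - 1)) x =
      1 / Gamma σ1 * (x - a) ^ (σ1 + σ2 - 1) * (b - a) ^ (σ3 - 1) *
        ∫ t in (0:ℝ)..1,
          t ^ (σ2 - 1) * (1 - t) ^ (σ1 - 1) * (1 - (x - a) / (b - a) * t) ^ (σ3 - 1) := by
  have hxa : 0 < x - a := by linarith
  have hpow : (x - a) * ((x - a) ^ (σ1 - 1) * (x - a) ^ (σ2 - 1)) =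
      (x - a) ^ (σ1 + σ2 - 1) := by
    rw [← rpow_add hxa, show σ1 + σ2 - 1 = σ1 - 1 + (σ2 - 1) + 1 by ring,
      rpow_add_one hxa.ne']
    ring
  rw [leftRL, intervalIntegral_eq_mul_integral_zero_one,
    intervalIntegral.integral_congr (g := fun t => (x - a) ^ (σ1 - 1) * (x - a) ^ (σ2 - 1) *
      (b - a) ^ (σ3 - 1) * (t ^ (σ2 - 1) * (1 - t) ^ (σ1 - 1) *
        (1 - (x - a) / (b - a) * t) ^ (σ3 - 1)))
    (fun t ht => rpow_weight_comp_affine σ1 σ2 σ3 hax.le hxb (hax.trans_le hxb)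
      (by rwa [Set.uIcc_of_le zero_le_one] at ht)),
    intervalIntegral.integral_const_mul, ← hpow]
  ring

theorem leftRL_power_weight_general (a b σ1 σ2 σ3 : ℝ)
    (hσ1 : 0 < σ1) (hσ2 : 0 < σ2) (x : ℝ) (hx : x ∈ Set.Ioo a b) :
    leftRL a σ1 (fun s => (s - a) ^ (σ2 - 1) * (b - s) ^ (σ3 - 1)) x =
      ((b - a) ^ (σ3 - 1) * Real.Gamma σ2 / Real.Gamma (σ1 + σ2)) *
        (x - a) ^ (σ1 + σ2 - 1) *
          hyp2F1 (1 - σ3) σ2 (σ1 + σ2) ((x - a) / (b - a)) := by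
  have hΓ2 : Gamma σ2 ≠ 0 := (Gamma_pos_of_pos hσ2).ne'
  have hΓ12 : Gamma (σ1 + σ2) ≠ 0 := (Gamma_pos_of_pos (by linarith)).ne'
  rw [leftRL_power_weight_eq_mul_integral σ1 σ2 σ3 hx.1 hx.2.le, hyp2F1,
    add_sub_cancel_right, neg_sub]
  field_simp

theorem leftRL_power_weight (a b σ1 σ2 σ3 : ℝ) (hab : a < b)
    (hσ1 : 0 < σ1) (hσ2 : 0 < σ2) (x : ℝ) (hx : x ∈ Set.Ioo a b) :
    leftRL a σ1 (fun s => (s - a) ^ (σ2 - 1) * (b - s) ^ (σ3 - 1)) x =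
      ((b - a) ^ (σ3 - 1) * Real.Gamma σ2 / Real.Gamma (σ1 + σ2)) *
        (x - a) ^ (σ1 + σ2 - 1) *
          hyp2F1 (1 - σ3) σ2 (σ1 + σ2) ((x - a) / (b - a)) :=
  leftRL_power_weight_general a b σ1 σ2 σ3 hσ1 hσ2 x hx
end

section
/- Let 0 < t < 1 and γ1, γ2 > 0. Then there exists a unique pair of real numbers (p, q) with −1 < p < 0 and −1 < q < 0 satisfying p + q = −t and γ1·sin(qπ) = γ2·sin(pπ). -/
/-!
Writing `p = -x` and `q = x - t`, the conditions say that `θ = x π ∈ (0, t π)` solves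
`γ₂ sin θ = γ₁ sin (t π - θ)`. The difference of the two sides changes sign on `[0, t π]`,
which gives a solution. For uniqueness, the identity
`sin u sin (c - v) - sin v sin (c - u) = sin c sin (u - v)` turns two solutions `u, v` into
`sin c sin (u - v) = 0`, and `0 < c < π`, `|u - v| < π` force `u = v`.
-/

open Real Set

theorem sin_mul_sin_sub_sub_sin_mul_sin_sub (x y c : ℝ) :
    sin x * sin (c - y) - sin y * sin (c - x) = sin c * sin (x - y) := by
  simp only [sin_sub]
  ring

theorem eq_of_sin_mul_sin_sub_eq {x y c : ℝ} (hc : sin c ≠ 0) (hxy : |x - y| < π)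
    (h : sin x * sin (c - y) = sin y * sin (c - x)) : x = y := by
  have hsin : sin (x - y) = 0 := by
    have := sin_mul_sin_sub_sub_sin_mul_sin_sub x y c
    rw [h, sub_self, eq_comm] at this
    exact (mul_eq_zero.mp this).resolve_left hc
  rw [abs_lt] at hxy
  exact sub_eq_zero.mp ((sin_eq_zero_iff_of_lt_of_lt hxy.1 hxy.2).mp hsin)

theorem exists_mem_Ioo_mul_sin_eq_mul_sin_sub {a b c : ℝ} (ha : 0 < a) (hb : 0 < b)
    (hc0 : 0 < c) (hcπ : c < π) : ∃ θ ∈ Ioo 0 c, a * sin θ = b * sin (c - θ) := by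
  have hsc : 0 < sin c := sin_pos_of_pos_of_lt_pi hc0 hcπ
  have hzero : (0 : ℝ) ∈ Ioo (a * sin 0 - b * sin (c - 0)) (a * sin c - b * sin (c - c)) := by
    simp only [sin_zero, sub_zero, sub_self, mul_zero, zero_sub]
    constructor <;> nlinarith
  obtain ⟨θ, hθ, hfθ⟩ := intermediate_value_Ioo hc0.le
    (f := fun θ => a * sin θ - b * sin (c - θ)) (by fun_prop) hzero
  exact ⟨θ, hθ, sub_eq_zero.mp hfθ⟩

theorem existsUnique_mem_Ioo_mul_sin_eq_mul_sin_sub {a b c : ℝ} (ha : 0 < a) (hb : 0 < b)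
    (hc0 : 0 < c) (hcπ : c < π) : ∃! θ, θ ∈ Ioo 0 c ∧ a * sin θ = b * sin (c - θ) := by
  obtain ⟨θ, hθ, hθeq⟩ := exists_mem_Ioo_mul_sin_eq_mul_sin_sub ha hb hc0 hcπ
  refine ⟨θ, ⟨hθ, hθeq⟩, fun φ ⟨hφ, hφeq⟩ => ?_⟩
  have hcross : sin φ * sin (c - θ) = sin θ * sin (c - φ) := by
    refine mul_left_cancel₀ ha.ne' ?_
    linear_combination sin (c - θ) * hφeq - sin (c - φ) * hθeq
  have hφθ : |φ - θ| < π := by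
    rw [abs_lt]
    constructor <;> linarith [hθ.1, hθ.2, hφ.1, hφ.2]
  exact eq_of_sin_mul_sin_sub_eq (sin_pos_of_pos_of_lt_pi hc0 hcπ).ne' hφθ hcross

theorem existsUnique_mem_Ioo_mul_sin_mul_pi_eq {a b t : ℝ} (ha : 0 < a) (hb : 0 < b)
    (ht0 : 0 < t) (ht1 : t < 1) :
    ∃! x, x ∈ Ioo 0 t ∧ a * sin (x * π) = b * sin ((t - x) * π) := by
  have hmul : ∀ {x y : ℝ}, x < y ↔ x * π < y * π :=
    fun {_ _} => (mul_lt_mul_iff_left₀ pi_pos).symm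
  obtain ⟨θ, ⟨⟨hθ0, hθt⟩, hθeq⟩, huniq⟩ := existsUnique_mem_Ioo_mul_sin_eq_mul_sin_sub
    (c := t * π) ha hb (by positivity) (by nlinarith [pi_pos])
  have hθ : θ / π * π = θ := div_mul_cancel₀ θ pi_ne_zero
  refine ⟨θ / π, ⟨⟨?_, ?_⟩, ?_⟩, fun x ⟨⟨hx0, hxt⟩, hxeq⟩ => ?_⟩
  · rwa [hmul, hθ, zero_mul]
  · rwa [hmul, hθ]
  · rwa [sub_mul, hθ]
  · have hxθ : x * π = θ :=
      huniq _ ⟨⟨by rwa [hmul, zero_mul] at hx0, hmul.mp hxt⟩, by rwa [← sub_mul]⟩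
    rw [← hxθ, mul_div_cancel_right₀ x pi_ne_zero]

theorem abel_exponents_exist_unique (t γ1 γ2 : ℝ)
    (ht0 : 0 < t) (ht1 : t < 1) (hγ1 : 0 < γ1) (hγ2 : 0 < γ2) :
    ∃! pq : ℝ × ℝ,
      (-1 < pq.1 ∧ pq.1 < 0) ∧ (-1 < pq.2 ∧ pq.2 < 0) ∧
        pq.1 + pq.2 = -t ∧ γ1 * Real.sin (pq.2 * π) = γ2 * Real.sin (pq.1 * π) := by
  obtain ⟨x, ⟨⟨hx0, hxt⟩, hxeq⟩, huniq⟩ :=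
    existsUnique_mem_Ioo_mul_sin_mul_pi_eq hγ2 hγ1 ht0 ht1
  have hsin : ∀ p : ℝ, γ1 * sin ((-t - p) * π) = γ2 * sin (p * π) ↔
      γ2 * sin (-p * π) = γ1 * sin ((t - -p) * π) := fun p => by
    rw [show (-t - p) * π = -((t - -p) * π) by ring, neg_mul, sin_neg, sin_neg]
    constructor <;> intro h <;> linarith
  refine ⟨(-x, -t - -x),
    ⟨⟨by linarith, by linarith⟩, ⟨by linarith, by linarith⟩, by ring, ?_⟩, ?_⟩
  · rwa [hsin, neg_neg]
  · rintro ⟨p, q⟩ ⟨⟨-, hp0⟩, ⟨-, hq0⟩, hsum, heq⟩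
    dsimp only at hp0 hq0 hsum heq
    obtain rfl : q = -t - p := by linarith
    have hpx : -p = x := huniq (-p) ⟨⟨by linarith, by linarith⟩, (hsin p).mp heq⟩
    rw [← hpx, neg_neg]
end

section
/- Let 0 < μ < 1, 0 < α, β < 1 with α + β = 1, and set A = α − β·cos(μπ), B = β·sin(μπ). Let θ ∈ [0, 2π) be defined by (A − iB)/(A + iB) = e^{iθ}. Then μ < θ/(2π) < 1. -/
/-! With `ψ = π - μπ`, the denominator is `w = A + iB = α + β e^{iψ}`, a positive combination
of `1` and `e^{iψ}`, so its argument `φ` lies strictly between `0` and `ψ`. The quotient is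
`conj w / w = e^{-2iφ}`, hence `θ = 2π - 2φ ∈ (2πμ, 2π)`. -/

open Real Complex ComplexConjugate

namespace Complex

lemma arg_exp_mul_I_of_mem_Ioc {ψ : ℝ} (hψ : ψ ∈ Set.Ioc (-π) π) : arg (exp (ψ * I)) = ψ := by
  rw [exp_mul_I]
  exact arg_cos_add_sin_mul_I hψ

lemma arg_pos_of_im_pos {z : ℂ} (hz : 0 < z.im) : 0 < arg z :=
  (arg_nonneg_iff.2 hz.le).lt_of_ne fun h => hz.ne' (arg_eq_zero_iff.1 h.symm).2

lemma arg_add_mul_exp_mem_Ioo {a b ψ : ℝ} (ha : 0 < a) (hb : 0 < b) (hψ : ψ ∈ Set.Ioo 0 π) :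
    arg (a + b * exp (ψ * I)) ∈ Set.Ioo 0 ψ := by
  obtain ⟨hψ0, hψπ⟩ := hψ
  have hsin : 0 < Real.sin ψ := sin_pos_of_pos_of_lt_pi hψ0 hψπ
  constructor
  · apply arg_pos_of_im_pos
    simpa [exp_ofReal_mul_I_im] using mul_pos hb hsin
  -- Rotating by `-ψ` moves the point into the lower half-plane.
  set u : ℂ := a * exp ((-ψ : ℝ) * I) + b
  have hu_im : u.im < 0 := by
    simp only [u, add_im, im_ofReal_mul, exp_ofReal_mul_I_im, ofReal_im, Real.sin_neg]
    linarith [mul_pos ha hsin]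
  have hu_arg : arg u ∈ Set.Ioo (-π) 0 := ⟨neg_pi_lt_arg u, arg_neg_iff.2 hu_im⟩
  have hu : u ≠ 0 := fun h => by simp [h] at hu_im
  have hrotate : (a : ℂ) + b * exp (ψ * I) = u * exp (ψ * I) := by
    rw [add_mul, mul_assoc, ← exp_add, ofReal_neg, neg_mul, neg_add_cancel, exp_zero, mul_one]
  have harg_exp : arg (exp (ψ * I)) = ψ :=
    arg_exp_mul_I_of_mem_Ioc ⟨by linarith [pi_pos], hψπ.le⟩
  rw [hrotate, arg_mul hu (exp_ne_zero _), harg_exp]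
  · linarith [hu_arg.2]
  · rw [harg_exp]
    constructor <;> linarith [hu_arg.1, hu_arg.2]

lemma conj_div_self_eq_exp {w : ℂ} (hw : w ≠ 0) :
    conj w / w = exp (-(2 * arg w : ℝ) * I) := by
  have hnorm : (‖w‖ : ℂ) ≠ 0 := ofReal_ne_zero.2 (norm_ne_zero_iff.2 hw)
  conv_lhs => rw [← norm_mul_exp_arg_mul_I w]
  rw [map_mul, conj_ofReal, ← exp_conj, map_mul, conj_ofReal, conj_I,
    mul_div_mul_left _ _ hnorm, ← exp_sub]
  congr 1
  push_cast
  ring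

lemma eq_of_exp_mul_I_eq {a x y : ℝ} (hx : x ∈ Set.Ico a (a + 2 * π))
    (hy : y ∈ Set.Ico a (a + 2 * π)) (h : exp (x * I) = exp (y * I)) : x = y :=
  Circle.exp_injOn_Ico (by linarith) hx hy (Circle.ext (by simpa using h))

end Complex

theorem theta_strictly_between_general (μ α β θ : ℝ)
    (hμ : 0 < μ ∧ μ < 1) (hα : 0 < α ∧ α < 1) (hβ : 0 < β ∧ β < 1)
    (A : ℝ) (hA : A = α - β * Real.cos (μ * π))
    (B : ℝ) (hB : B = β * Real.sin (μ * π))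
    (hθ0 : 0 ≤ θ) (hθ2π : θ < 2 * π)
    (hθ : ((A : ℂ) - B * Complex.I) / ((A : ℂ) + B * Complex.I)
        = Complex.exp (θ * Complex.I)) :
    μ < θ / (2 * π) ∧ θ / (2 * π) < 1 := by
  have hw : (A : ℂ) + B * I = α + β * exp ((π - μ * π : ℝ) * I) := by
    rw [hA, hB, exp_mul_I, ← ofReal_cos, ← ofReal_sin, Real.cos_pi_sub, Real.sin_pi_sub]
    push_cast
    ring
  have hψ : π - μ * π ∈ Set.Ioo 0 π :=
    ⟨by linarith [mul_lt_of_lt_one_left pi_pos hμ.2], by linarith [mul_pos hμ.1 pi_pos]⟩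
  obtain ⟨hφ0, hφψ⟩ := arg_add_mul_exp_mem_Ioo hα.1 hβ.1 hψ
  rw [← hw] at hφ0 hφψ
  set φ := arg ((A : ℂ) + B * I)
  have hθφ : θ = 2 * π - 2 * φ := by
    refine eq_of_exp_mul_I_eq (a := 0) ⟨hθ0, by linarith⟩ ⟨by linarith [hψ.2], by linarith⟩ ?_
    have hw0 : (A : ℂ) + B * I ≠ 0 := fun h => by simp [φ, h] at hφ0
    have hconj : (A : ℂ) - B * I = conj ((A : ℂ) + B * I) := by simp [sub_eq_add_neg]
    rw [← hθ, hconj, conj_div_self_eq_exp hw0,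
      show ((2 * π - 2 * φ : ℝ) : ℂ) = -((2 * φ : ℝ) : ℂ) + 2 * π by push_cast; ring]
    exact (exp_mul_I_periodic _).symm
  constructor
  · rw [lt_div_iff₀ two_pi_pos]; linarith
  · rw [div_lt_one two_pi_pos]; exact hθ2π

theorem theta_strictly_between (μ α β θ : ℝ)
    (hμ : 0 < μ ∧ μ < 1) (hα : 0 < α ∧ α < 1) (hβ : 0 < β ∧ β < 1)
    (hαβ : α + β = 1)
    (A : ℝ) (hA : A = α - β * Real.cos (μ * π))
    (B : ℝ) (hB : B = β * Real.sin (μ * π))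
    (hθ0 : 0 ≤ θ) (hθ2π : θ < 2 * π)
    (hθ : ((A : ℂ) - B * Complex.I) / ((A : ℂ) + B * Complex.I)
        = Complex.exp (θ * Complex.I)) :
    μ < θ / (2 * π) ∧ θ / (2 * π) < 1 :=
  theta_strictly_between_general μ α β θ hμ hα hβ A hA B hB hθ0 hθ2π hθ
end

section
/- Let 0 < μ < 1, 0 < α, β < 1 with α + β = 1, A = α − β cos(μπ), B = β sin(μπ), and let θ ∈ (0, 2π) satisfy (A − iB)/(A + iB) = e^{iθ}. Then α/β = sin((θ − 2μπ)/2) / sin(θ/2). -/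
open Real ComplexConjugate

/-- `conj z = e^{iθ} z` says that `e^{iθ/2} z` is real. -/
theorem Complex.re_mul_sin_add_im_mul_cos_eq_zero {z : ℂ} {θ : ℝ}
    (h : conj z = Complex.exp (θ * Complex.I) * z) :
    z.re * Real.sin (θ / 2) + z.im * Real.cos (θ / 2) = 0 := by
  set w := Complex.exp ((θ / 2 : ℝ) * Complex.I) * z
  have hw : conj w = w := by
    simp only [w, map_mul, h, ← Complex.exp_conj, Complex.conj_ofReal, Complex.conj_I,
      ← mul_assoc, ← Complex.exp_add]
    congr 2
    push_cast
    ring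
  have him := Complex.conj_eq_iff_im.mp hw
  simp only [w, Complex.mul_im, Complex.exp_ofReal_mul_I_re, Complex.exp_ofReal_mul_I_im] at him
  linear_combination him

theorem Complex.conj_eq_exp_mul_of_conj_div_eq_exp {z : ℂ} {θ : ℝ}
    (h : conj z / z = Complex.exp (θ * Complex.I)) :
    conj z = Complex.exp (θ * Complex.I) * z := by
  -- for `z = 0` the quotient is `0 / 0 = 0`, which is not an exponential
  have hz : z ≠ 0 := by
    rintro rfl
    exact Complex.exp_ne_zero (θ * Complex.I) (by simpa using h.symm)
  rw [div_eq_iff hz] at h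
  rw [h, mul_comm]

theorem alpha_beta_ratio_of_theta_general (μ α β θ : ℝ)
    (hβ : 0 < β ∧ β < 1)
    (A : ℝ) (hA : A = α - β * Real.cos (μ * π))
    (B : ℝ) (hB : B = β * Real.sin (μ * π))
    (hθ0 : 0 < θ) (hθ2π : θ < 2 * π)
    (hθ : ((A : ℂ) - B * Complex.I) / ((A : ℂ) + B * Complex.I)
        = Complex.exp (θ * Complex.I)) :
    α / β = Real.sin ((θ - 2 * μ * π) / 2) / Real.sin (θ / 2) := by
  have hconj : conj ((A : ℂ) + B * Complex.I) = A - B * Complex.I := by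
    simp [sub_eq_add_neg]
  have key := Complex.re_mul_sin_add_im_mul_cos_eq_zero
    (Complex.conj_eq_exp_mul_of_conj_div_eq_exp (hconj ▸ hθ))
  simp only [Complex.add_re, Complex.add_im, Complex.ofReal_re, Complex.ofReal_im,
    Complex.mul_re, Complex.mul_im, Complex.I_re, Complex.I_im] at key
  have hsin : Real.sin (θ / 2) ≠ 0 := (sin_pos_of_pos_of_lt_pi (by linarith) (by linarith)).ne'
  rw [div_eq_div_iff hβ.1.ne' hsin, show (θ - 2 * μ * π) / 2 = θ / 2 - μ * π by ring, sin_sub]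
  subst hA hB
  linear_combination key

theorem alpha_beta_ratio_of_theta (μ α β θ : ℝ)
    (hμ : 0 < μ ∧ μ < 1) (hα : 0 < α ∧ α < 1) (hβ : 0 < β ∧ β < 1)
    (hαβ : α + β = 1)
    (A : ℝ) (hA : A = α - β * Real.cos (μ * π))
    (B : ℝ) (hB : B = β * Real.sin (μ * π))
    (hθ0 : 0 < θ) (hθ2π : θ < 2 * π)
    (hθ : ((A : ℂ) - B * Complex.I) / ((A : ℂ) + B * Complex.I)
        = Complex.exp (θ * Complex.I)) :
    α / β = Real.sin ((θ - 2 * μ * π) / 2) / Real.sin (θ / 2) :=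
  alpha_beta_ratio_of_theta_general μ α β θ hβ A hA B hB hθ0 hθ2π hθ
end

section
/- Let a < b, and let g : [a,b] → ℝ be Hölder continuous with exponent k ∈ (0,1] and satisfy g(a) = 0. Then for any 0 < μ < k and any 0 < l < k − μ, the function h(x) = g(x)/(x−a)^μ (with h(a) defined as 0) is Hölder continuous with exponent l on [a,b] and satisfies h(a) = 0. -/
/-!
Write `h x = g x / (x - a) ^ μ`, `t = y - a` and `δ = x - y ≥ 0`. Then
`h x - h y = (g x - g y) / (t + δ) ^ μ + g y * (1 / (t + δ) ^ μ - 1 / t ^ μ)`.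
The first term is at most `C δ ^ k / δ ^ μ`; in the second `|g y| ≤ C t ^ k` and
`1 / t ^ μ - 1 / (t + δ) ^ μ ≤ min 1 (δ / t) / t ^ μ`, and `t ^ (k - μ) * min 1 (δ / t) ≤ δ ^ (k - μ)`
by concavity of `r ↦ r ^ (k - μ)`. So `h` is `(k - μ)`-Hölder with constant `2 C`, hence
`l`-Hölder on the bounded interval `[a, b]` for every `l ≤ k - μ`.
-/

open Real Set

lemma rpow_le_rpow_sub_mul_rpow {d D α β : ℝ} (hd : 0 ≤ d) (hdD : d ≤ D) (hβ : 0 ≤ β)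
    (hβα : β ≤ α) : d ^ α ≤ D ^ (α - β) * d ^ β := by
  rcases hβα.eq_or_lt with rfl | hlt
  · simp
  calc d ^ α = d ^ (α - β) * d ^ β := by
        rw [← rpow_add' hd (by rw [sub_add_cancel]; exact (hβ.trans_lt hlt).ne'), sub_add_cancel]
    _ ≤ D ^ (α - β) * d ^ β := by gcongr

lemma holder_const_nonneg {f : ℝ → ℝ} {s : Set ℝ} {C r x y : ℝ} (hx : x ∈ s) (hy : y ∈ s)
    (hxy : x ≠ y) (hf : ∀ x ∈ s, ∀ y ∈ s, |f x - f y| ≤ C * |x - y| ^ r) : 0 ≤ C :=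
  nonneg_of_mul_nonneg_left ((abs_nonneg _).trans (hf x hx y hy))
    (rpow_pos_of_pos (abs_pos.2 (sub_ne_zero.2 hxy)) r)

lemma holder_of_exponent_le {f : ℝ → ℝ} {s : Set ℝ} {C D α β : ℝ} (hC : 0 ≤ C) (hβ : 0 ≤ β)
    (hβα : β ≤ α) (hs : ∀ x ∈ s, ∀ y ∈ s, |x - y| ≤ D)
    (hf : ∀ x ∈ s, ∀ y ∈ s, |f x - f y| ≤ C * |x - y| ^ α) :
    ∀ x ∈ s, ∀ y ∈ s, |f x - f y| ≤ C * D ^ (α - β) * |x - y| ^ β := fun x hx y hy =>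
  calc |f x - f y| ≤ C * |x - y| ^ α := hf x hx y hy
    _ ≤ C * (D ^ (α - β) * |x - y| ^ β) := by
        gcongr; exact rpow_le_rpow_sub_mul_rpow (abs_nonneg _) (hs x hx y hy) hβ hβα
    _ = C * D ^ (α - β) * |x - y| ^ β := by ring

lemma holder_of_forall_lt {f : ℝ → ℝ} {s : Set ℝ} {C r : ℝ} (hC : 0 ≤ C)
    (hf : ∀ x ∈ s, ∀ y ∈ s, y < x → |f x - f y| ≤ C * (x - y) ^ r) :
    ∀ x ∈ s, ∀ y ∈ s, |f x - f y| ≤ C * |x - y| ^ r := by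
  intro x hx y hy
  rcases lt_trichotomy x y with hxy | rfl | hyx
  · rw [abs_sub_comm (f x), abs_sub_comm x, abs_of_pos (sub_pos.2 hxy)]
    exact hf y hy x hx hxy
  · simp only [sub_self, abs_zero]
    positivity
  · rw [abs_of_pos (sub_pos.2 hyx)]
    exact hf x hx y hy hyx

lemma rpow_mul_min_one_div_le {t δ γ : ℝ} (ht : 0 < t) (hδ : 0 ≤ δ) (hγ0 : 0 ≤ γ)
    (hγ1 : γ ≤ 1) : t ^ γ * min 1 (δ / t) ≤ δ ^ γ := by
  rcases le_total t δ with htδ | hδt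
  · calc t ^ γ * min 1 (δ / t) ≤ t ^ γ * 1 := by gcongr; exact min_le_left _ _
      _ ≤ δ ^ γ := by rw [mul_one]; gcongr
  · have hr1 : δ / t ≤ 1 := (div_le_one ht).2 hδt
    calc t ^ γ * min 1 (δ / t) ≤ t ^ γ * (δ / t) ^ γ := by
          gcongr
          exact (min_le_right _ _).trans (self_le_rpow_of_le_one (by positivity) hr1 hγ1)
      _ = δ ^ γ := by rw [div_rpow hδ ht.le]; field_simp

lemma one_div_rpow_sub_one_div_rpow_le {t δ μ : ℝ} (ht : 0 < t) (hδ : 0 ≤ δ) (hμ1 : μ ≤ 1) : 1 / t ^ μ - 1 / (t + δ) ^ μ ≤ min 1 (δ / t) / t ^ μ := by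
  have htδ : 0 < t + δ := by linarith
  set r := t / (t + δ) with hr
  have hr_le : r ≤ r ^ μ :=
    self_le_rpow_of_le_one (by positivity) ((div_le_one htδ).2 (by linarith)) hμ1
  have hscale : (1 / t ^ μ - 1 / (t + δ) ^ μ) * t ^ μ = 1 - r ^ μ := by
    rw [hr, div_rpow ht.le htδ.le]
    field_simp
  rw [le_div_iff₀ (rpow_pos_of_pos ht μ), hscale]
  refine le_min (by linarith [rpow_nonneg (show 0 ≤ r by positivity) μ]) ?_
  calc 1 - r ^ μ ≤ 1 - r := by linarith
    _ = δ / (t + δ) := by rw [hr]; field_simp; ring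
    _ ≤ δ / t := div_le_div_of_nonneg_left hδ ht (by linarith)

lemma abs_div_rpow_le_of_abs_le {w C k μ δ s : ℝ} (hδ : 0 < δ) (hδs : δ ≤ s) (hμ0 : 0 ≤ μ)
    (hw : |w| ≤ C * δ ^ k) : |w| / s ^ μ ≤ C * δ ^ (k - μ) :=
  calc |w| / s ^ μ ≤ C * δ ^ k / δ ^ μ :=
        div_le_div₀ ((abs_nonneg w).trans hw) hw (rpow_pos_of_pos hδ μ)
          (rpow_le_rpow hδ.le hδs hμ0)
    _ = C * δ ^ (k - μ) := by rw [rpow_sub hδ, mul_div_assoc]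

lemma abs_mul_abs_one_div_rpow_sub_le {u C k μ t δ : ℝ} (ht : 0 < t) (hδ : 0 ≤ δ) (hC : 0 ≤ C)
    (hμ0 : 0 ≤ μ) (hμk : μ ≤ k) (hk1 : k ≤ 1) (hu : |u| ≤ C * t ^ k) :
    |u| * |1 / t ^ μ - 1 / (t + δ) ^ μ| ≤ C * δ ^ (k - μ) := by
  have hdiff : 0 ≤ 1 / t ^ μ - 1 / (t + δ) ^ μ :=
    sub_nonneg.2 (one_div_le_one_div_of_le (rpow_pos_of_pos ht μ)
      (rpow_le_rpow ht.le (by linarith) hμ0))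
  calc |u| * |1 / t ^ μ - 1 / (t + δ) ^ μ|
      ≤ C * t ^ k * (min 1 (δ / t) / t ^ μ) := by
        rw [abs_of_nonneg hdiff]
        gcongr
        exact one_div_rpow_sub_one_div_rpow_le ht hδ (hμk.trans hk1)
    _ = C * (t ^ (k - μ) * min 1 (δ / t)) := by rw [rpow_sub ht]; ring
    _ ≤ C * δ ^ (k - μ) := by
        gcongr
        exact rpow_mul_min_one_div_le ht hδ (by linarith) (by linarith)

lemma holder_div_rpow_sub {g : ℝ → ℝ} {a b C k μ : ℝ} (hC : 0 ≤ C) (hμ0 : 0 ≤ μ) (hμk : μ ≤ k)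
    (hk1 : k ≤ 1) (hg : ∀ x ∈ Icc a b, ∀ y ∈ Icc a b, |g x - g y| ≤ C * |x - y| ^ k)
    (hga : g a = 0) :
    ∀ x ∈ Icc a b, ∀ y ∈ Icc a b,
      |g x / (x - a) ^ μ - g y / (y - a) ^ μ| ≤ 2 * C * |x - y| ^ (k - μ) := by
  refine holder_of_forall_lt (by positivity) fun x hx y hy hyx => ?_
  have hgd : |g x - g y| ≤ C * (x - y) ^ k := by
    simpa only [abs_of_pos (sub_pos.2 hyx)] using hg x hx y hy
  have hsplit : |g x / (x - a) ^ μ - g y / (y - a) ^ μ|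
      ≤ |g x - g y| / (x - a) ^ μ + |g y| * |1 / (y - a) ^ μ - 1 / (x - a) ^ μ| := by
    calc |g x / (x - a) ^ μ - g y / (y - a) ^ μ|
        = |(g x - g y) / (x - a) ^ μ + g y * (1 / (x - a) ^ μ - 1 / (y - a) ^ μ)| := by ring_nf
      _ ≤ _ := by
        grw [abs_add_le, abs_div, abs_mul, abs_sub_comm (1 / (x - a) ^ μ),
          abs_of_nonneg (rpow_nonneg (by linarith [hx.1, hyx]) μ)]
  have hfirst : |g x - g y| / (x - a) ^ μ ≤ C * (x - y) ^ (k - μ) :=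
    abs_div_rpow_le_of_abs_le (sub_pos.2 hyx) (by linarith [hy.1]) hμ0 hgd
  have hsecond : |g y| * |1 / (y - a) ^ μ - 1 / (x - a) ^ μ| ≤ C * (x - y) ^ (k - μ) := by
    rcases hy.1.eq_or_lt with rfl | hay
    · rw [hga, abs_zero, zero_mul]
      exact mul_nonneg hC (rpow_nonneg (by linarith) _)
    have hgy : |g y| ≤ C * (y - a) ^ k := by
      simpa only [hga, sub_zero, abs_of_pos (sub_pos.2 hay)]
        using hg y hy a (left_mem_Icc.2 (hy.1.trans hy.2))
    simpa only [sub_add_sub_cancel'] using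
      abs_mul_abs_one_div_rpow_sub_le (sub_pos.2 hay) (sub_nonneg.2 hyx.le) hC hμ0 hμk hk1 hgy
  linarith

theorem holder_div_power_general (a b k μ l : ℝ) (hab : a < b)
    (hk1 : k ≤ 1) (g : ℝ → ℝ) (C : ℝ)
    (hg : ∀ x ∈ Set.Icc a b, ∀ y ∈ Set.Icc a b, |g x - g y| ≤ C * |x - y| ^ k)
    (hga : g a = 0) (hμ0 : 0 < μ) (hμk : μ < k) (hl0 : 0 < l) (hlk : l < k - μ) :
    ∃ C' : ℝ, 0 ≤ C' ∧
      (∀ x ∈ Set.Icc a b, ∀ y ∈ Set.Icc a b,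
        |g x / (x - a) ^ μ - g y / (y - a) ^ μ| ≤ C' * |x - y| ^ l) ∧
      g a / (a - a) ^ μ = 0 := by
  have hC : 0 ≤ C :=
    holder_const_nonneg (left_mem_Icc.2 hab.le) (right_mem_Icc.2 hab.le) hab.ne hg
  have hdiam : ∀ x ∈ Icc a b, ∀ y ∈ Icc a b, |x - y| ≤ b - a := fun x hx y hy => by
    simpa only [dist_eq] using dist_le_of_mem_Icc hx hy
  refine ⟨2 * C * (b - a) ^ (k - μ - l),
    mul_nonneg (by positivity) (rpow_nonneg (sub_nonneg.2 hab.le) _), ?_,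
    by rw [hga, zero_div]⟩
  exact holder_of_exponent_le (by positivity) hl0.le hlk.le hdiam
    (holder_div_rpow_sub hC hμ0.le hμk.le hk1 hg hga)

theorem holder_div_power (a b k μ l : ℝ) (hab : a < b)
    (hk0 : 0 < k) (hk1 : k ≤ 1) (g : ℝ → ℝ) (C : ℝ)
    (hg : ∀ x ∈ Set.Icc a b, ∀ y ∈ Set.Icc a b, |g x - g y| ≤ C * |x - y| ^ k)
    (hga : g a = 0) (hμ0 : 0 < μ) (hμk : μ < k) (hl0 : 0 < l) (hlk : l < k - μ) :
    ∃ C' : ℝ, 0 ≤ C' ∧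
      (∀ x ∈ Set.Icc a b, ∀ y ∈ Set.Icc a b,
        |g x / (x - a) ^ μ - g y / (y - a) ^ μ| ≤ C' * |x - y| ^ l) ∧
      g a / (a - a) ^ μ = 0 :=
  holder_div_power_general a b k μ l hab hk1 g C hg hga hμ0 hμk hl0 hlk
end
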